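/- arXiv:2405.12680 — 6 statements merged into one kernel-verified Lean document; each statement's English description precedes it below -/
import Mathlib

section
/- Let p be a prime and c_1, ..., c_n be distinct positive integers. Then the n×n matrix M whose (i,j)-entry is c_j^{p^{i-1}} has nonzero determinant; equivalently, its columns are Z-linearly independent. -/
/-!
If the determinant vanished, a nonzero vector `v` would satisfy `v ᵥ* M = 0`, i.e. the polynomial
`∑ i, v i X ^ (p ^ i)`, which has at most `n` nonzero coefficients, would vanish at the `n`
distinct positive numbers `c j`. By Descartes' rule of signs a nonzero polynomial with `k` nonzero
coefficients has at most `k - 1` sign changes, hence fewer than `k` positive roots.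
-/

open Finset Function

namespace Polynomial

theorem signVariations_lt_card_support {R : Type*} [Semiring R] [LinearOrder R] {P : R[X]}
    (hP : P ≠ 0) : signVariations P < #P.support := by
  by_cases hE : P.eraseLead = 0
  · have hmono : P = monomial P.natDegree P.leadingCoeff := by
      simpa [hE] using (eraseLead_add_monomial_natDegree_leadingCoeff P).symm
    rw [hmono, signVariations_monomial, ← hmono]
    exact card_pos.mpr (support_nonempty.mpr hP)
  · calc signVariations P ≤ signVariations P.eraseLead + 1 := signVariations_le_eraseLead_succ P
      _ < #P.eraseLead.support + 1 := by gcongr; exact signVariations_lt_card_support hE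
      _ = #P.support := card_support_eraseLead_add_one hP
termination_by #P.support
decreasing_by exact eraseLead_support_card_lt hP

section OrderedRing

variable {R : Type*} [CommRing R] [LinearOrder R] [IsStrictOrderedRing R] {P : R[X]}

theorem roots_countP_pos_lt_card_support (hP : P ≠ 0) :
    P.roots.countP (0 < ·) < #P.support :=
  (roots_countP_pos_le_signVariations P).trans_lt (signVariations_lt_card_support hP)

theorem card_lt_card_support_of_forall_pos_isRoot (hP : P ≠ 0) {s : Finset R}
    (hpos : ∀ x ∈ s, 0 < x) (hroot : ∀ x ∈ s, P.IsRoot x) : #s < #P.support := by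
  have hle : s.val ≤ P.roots.filter (0 < ·) :=
    (Multiset.le_iff_subset s.nodup).mpr fun x hx =>
      Multiset.mem_filter.mpr ⟨(mem_roots hP).mpr (hroot x hx), hpos x hx⟩
  calc #s ≤ P.roots.countP (0 < ·) := by
        rw [Multiset.countP_eq_card_filter]; exact Multiset.card_le_card hle
    _ < #P.support := roots_countP_pos_lt_card_support hP

end OrderedRing

theorem support_sum_C_mul_X_pow_subset {R ι : Type*} [Semiring R] (s : Finset ι) (a : ι → R)
    (e : ι → ℕ) : (∑ i ∈ s, C (a i) * X ^ e i).support ⊆ s.image e := by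
  intro m hm
  rw [mem_support_iff, finsetSum_coeff] at hm
  obtain ⟨i, hi, hne⟩ := exists_ne_zero_of_sum_ne_zero hm
  rw [coeff_C_mul_X_pow] at hne
  exact mem_image.mpr ⟨i, hi, (of_not_not fun h => hne (if_neg h)).symm⟩

end Polynomial

namespace Matrix

open Polynomial

def generalizedVandermonde {R ι : Type*} [Semiring R] (x : ι → R) (e : ι → ℕ) : Matrix ι ι R :=
  of fun i j => x j ^ e i

theorem det_generalizedVandermonde_ne_zero {R ι : Type*} [CommRing R] [LinearOrder R]
    [IsStrictOrderedRing R] [Fintype ι] [DecidableEq ι] {x : ι → R} (hpos : ∀ j, 0 < x j)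
    (hx : Injective x) {e : ι → ℕ} (he : Injective e) :
    (generalizedVandermonde x e).det ≠ 0 := by
  intro hdet
  obtain ⟨v, hv, hvM⟩ := exists_vecMul_eq_zero_iff.mpr hdet
  set P : R[X] := ∑ i, C (v i) * X ^ e i
  have hcoeff (i : ι) : P.coeff (e i) = v i := by
    simp [P, he.eq_iff]
  have hP : P ≠ 0 := by
    obtain ⟨i, hi⟩ := Function.ne_iff.mp hv
    exact fun h => hi (by simpa [h] using (hcoeff i).symm)
  have hroot (j : ι) : P.IsRoot (x j) := by
    simpa [P, generalizedVandermonde, vecMul, dotProduct, eval_finsetSum] using congrFun hvM j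
  have hroots := card_lt_card_support_of_forall_pos_isRoot hP (s := univ.image x)
    (by simpa using hpos) (by simpa using hroot)
  have hsupport : #P.support ≤ #(univ : Finset ι) :=
    (card_le_card (support_sum_C_mul_X_pow_subset univ v e)).trans card_image_le
  rw [card_image_of_injective _ hx] at hroots
  omega

end Matrix

theorem stmt_0 (p : ℕ) (hp : p.Prime) (n : ℕ) (c : Fin n → ℤ)
    (hpos : ∀ i, 0 < c i) (hdist : Function.Injective c) :
    (Matrix.of (fun i j : Fin n => c j ^ p ^ (i : ℕ))).det ≠ 0 :=
  Matrix.det_generalizedVandermonde_ne_zero hpos hdist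
    ((Nat.pow_right_injective hp.two_le).comp Fin.val_injective)
end

section
/- Let p be an odd prime, A = Z[X_1,...,X_n] a polynomial ring over Z, and f_1, ..., f_r distinct nonzero elements of A with f_i ≠ -f_j for all i ≠ j. Then the Teichmüller sequences ⟨f_i⟩ := (f_i, f_i^p, f_i^{p^2}, ...) ∈ A^ℕ are Z-linearly independent in the A-module A^ℕ (with Z acting diagonally). -/
/-!
Specialise the variables to an integer point at which no `f i` and no `f i ∓ f j` vanishes; there the
values `a i` are nonzero integers of pairwise distinct absolute values, and the relation becomes
`∑ c i * a i ^ p ^ k = 0` for all `k`. Dividing by the power of the `a i` of largest absolute value,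
every other term tends to `0` as `k → ∞`, so its coefficient vanishes, and one concludes by induction.
-/

open Filter Finset

/-- The Teichmüller sequence `⟨r⟩ = (r, r^p, r^{p^2}, ...)` in `A^ℕ`. -/
def teich (p : ℕ) {A : Type*} [CommRing A] (r : A) : ℕ → A := fun k => r ^ p ^ k

theorem Finset.eq_zero_of_forall_sum_mul_pow_eq_zero {𝕜 ι : Type*} [NormedField 𝕜]
    {N : ℕ → ℕ} (hN : Tendsto N atTop atTop) (a c : ι → 𝕜) (s : Finset ι)
    (ha : ∀ i ∈ s, a i ≠ 0) (hinj : Set.InjOn (fun i => ‖a i‖) s)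
    (h : ∀ k, ∑ i ∈ s, c i * a i ^ N k = 0) : ∀ i ∈ s, c i = 0 := by
  classical
  induction s using Finset.induction_on_max_value (fun i => ‖a i‖) with
  | empty => simp
  | insert j s hj hmax ih =>
    have hlt : ∀ i ∈ s, ‖a i / a j‖ < 1 := by
      intro i hi
      have hne : ‖a i‖ ≠ ‖a j‖ := fun he =>
        hj (hinj (mem_insert_of_mem hi) (mem_insert_self j s) he ▸ hi)
      rw [norm_div, div_lt_one (norm_pos_iff.mpr (ha j (mem_insert_self j s)))]
      exact lt_of_le_of_ne (hmax i hi) hne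
    have hcj : c j = 0 := by
      have hdiv : ∀ k, c j = -∑ i ∈ s, c i * (a i / a j) ^ N k := by
        intro k
        have hk := h k
        rw [sum_insert hj] at hk
        have haj : a j ^ N k ≠ 0 := pow_ne_zero _ (ha j (mem_insert_self j s))
        calc c j = c j * a j ^ N k / a j ^ N k := (mul_div_cancel_right₀ _ haj).symm
          _ = -(∑ i ∈ s, c i * a i ^ N k) / a j ^ N k := by rw [eq_neg_of_add_eq_zero_left hk]
          _ = -∑ i ∈ s, c i * (a i / a j) ^ N k := by
            simp only [neg_div, sum_div, div_pow, mul_div_assoc]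
      have hlim : Tendsto (fun k => -∑ i ∈ s, c i * (a i / a j) ^ N k) atTop (nhds 0) := by
        simpa using (tendsto_finsetSum s fun i hi =>
          ((tendsto_pow_atTop_nhds_zero_of_norm_lt_one (hlt i hi)).comp hN).const_mul (c i)).neg
      exact tendsto_nhds_unique (tendsto_const_nhds.congr hdiv) hlim
    have hs := ih (fun i hi => ha i (mem_insert_of_mem hi))
      (hinj.mono (by simp)) (fun k => by simpa [sum_insert hj, hcj] using h k)
    simpa [forall_mem_insert, hcj] using hs

theorem MvPolynomial.exists_forall_eval_ne_zero {R σ ι : Type*} [CommRing R] [IsDomain R]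
    [Infinite R] [Fintype ι] (g : ι → MvPolynomial σ R) (hg : ∀ i, g i ≠ 0) :
    ∃ x, ∀ i, eval x (g i) ≠ 0 := by
  obtain ⟨x, hx⟩ : ∃ x, eval x (∏ i, g i) ≠ 0 := by
    by_contra! h
    exact prod_ne_zero_iff.mpr (fun i _ => hg i) (MvPolynomial.funext fun x => by rw [h x, map_zero])
  rw [map_prod] at hx
  exact ⟨x, fun i => prod_ne_zero_iff.mp hx i (mem_univ i)⟩

theorem MvPolynomial.exists_eval_ne_zero_and_ne_pm {R σ ι : Type*} [CommRing R] [IsDomain R]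
    [Infinite R] [Fintype ι] (f : ι → MvPolynomial σ R) (hne : ∀ i, f i ≠ 0)
    (hdist : ∀ i j, i ≠ j → f i ≠ f j ∧ f i ≠ -f j) :
    ∃ x, (∀ i, eval x (f i) ≠ 0) ∧
      ∀ i j, i ≠ j → eval x (f i) ≠ eval x (f j) ∧ eval x (f i) ≠ -eval x (f j) := by
  classical
  obtain ⟨x, hx⟩ := exists_forall_eval_ne_zero
    (fun q : ι × ι => if q.1 = q.2 then f q.1 else f q.1 ^ 2 - f q.2 ^ 2) <| by
      rintro ⟨i, j⟩
      dsimp only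
      split_ifs with hij
      · exact hne i
      · rw [sub_ne_zero, Ne, sq_eq_sq_iff_eq_or_eq_neg, not_or]
        exact hdist i j hij
  refine ⟨x, fun i => by simpa using hx (i, i), fun i j hij => ?_⟩
  simpa [hij, sub_eq_zero, sq_eq_sq_iff_eq_or_eq_neg, not_or] using hx (i, j)

theorem stmt_3_general (p : ℕ) (hp : p.Prime) (n r : ℕ)
    (f : Fin r → MvPolynomial (Fin n) ℤ)
    (hne : ∀ i, f i ≠ 0)
    (hdist : ∀ i j : Fin r, i ≠ j → f i ≠ f j ∧ f i ≠ -f j)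
    (c : Fin r → ℤ)
    (hsum : ∑ i, c i • teich p (f i) = 0) :
    ∀ i, c i = 0 := by
  obtain ⟨x, hx0, hxpm⟩ := MvPolynomial.exists_eval_ne_zero_and_ne_pm f hne hdist
  let a : Fin r → ℝ := fun i => (MvPolynomial.eval x (f i) : ℤ)
  have hinj : Set.InjOn (fun i => ‖a i‖) (univ : Finset (Fin r)) := by
    intro i _ j _ hij
    by_contra hne'
    simp only [a, Real.norm_eq_abs, ← Int.cast_abs, Int.cast_inj, abs_eq_abs] at hij
    exact hij.elim (hxpm i j hne').1 (hxpm i j hne').2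
  have hrel : ∀ k, ∑ i, (c i : ℝ) * a i ^ p ^ k = 0 := fun k => by
    have := congrArg (MvPolynomial.eval x) (congrFun hsum k)
    simp only [Finset.sum_apply, Pi.smul_apply, teich, map_sum, map_zsmul, map_pow, Pi.zero_apply,
      map_zero, smul_eq_mul] at this
    simp only [a]
    exact_mod_cast this
  intro i
  exact_mod_cast eq_zero_of_forall_sum_mul_pow_eq_zero
    (tendsto_pow_atTop_atTop_of_one_lt hp.one_lt) a (fun i => (c i : ℝ)) univ
    (fun i _ => Int.cast_ne_zero.mpr (hx0 i)) hinj hrel i (mem_univ i)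

theorem stmt_3 (p : ℕ) (hp : p.Prime) (hodd : p ≠ 2) (n r : ℕ)
    (f : Fin r → MvPolynomial (Fin n) ℤ)
    (hne : ∀ i, f i ≠ 0)
    (hdist : ∀ i j : Fin r, i ≠ j → f i ≠ f j ∧ f i ≠ -f j)
    (c : Fin r → ℤ)
    (hsum : ∑ i, c i • teich p (f i) = 0) :
    ∀ i, c i = 0 :=
  stmt_3_general p hp n r f hne hdist c hsum
end

section
/- Let p be a prime and R a commutative ring. The map R → W(R) given by x ↦ V⟨x^p⟩ − p⟨x⟩ is additive, i.e., V⟨(x+y)^p⟩ − p⟨x+y⟩ = (V⟨x^p⟩ − p⟨x⟩) + (V⟨y^p⟩ − p⟨y⟩) for all x, y ∈ R. -/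
open WittVector

private theorem aux₁ (p : ℕ) [hp : Fact p.Prime] {S : Type*} (x y : MvPolynomial S ℚ) :
    WittVector.verschiebung (WittVector.teichmuller p ((x + y) ^ p))
        - p • WittVector.teichmuller p (x + y)
      = (WittVector.verschiebung (WittVector.teichmuller p (x ^ p))
          - p • WittVector.teichmuller p x)
        + (WittVector.verschiebung (WittVector.teichmuller p (y ^ p))
          - p • WittVector.teichmuller p y) := by
  apply (ghostMap.bijective_of_invertible p (MvPolynomial S ℚ)).1
  ext1 n
  have hg : ∀ z : WittVector p (MvPolynomial S ℚ), ghostMap z n = ghostComponent n z :=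
    fun _ => rfl
  simp only [map_sub, map_add, Pi.sub_apply, Pi.add_apply, hg, map_nsmul]
  cases n with
  | zero =>
      simp only [ghostComponent_zero_verschiebung, ghostComponent_teichmuller]
      simp only [pow_zero, pow_one]
      ring
  | succ n =>
      simp only [ghostComponent_verschiebung, ghostComponent_teichmuller, ← pow_mul,
        ← pow_succ']
      ring

private theorem aux₂ (p : ℕ) [hp : Fact p.Prime] {S : Type*} (x y : MvPolynomial S ℤ) :
    WittVector.verschiebung (WittVector.teichmuller p ((x + y) ^ p))
        - p • WittVector.teichmuller p (x + y)
      = (WittVector.verschiebung (WittVector.teichmuller p (x ^ p))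
          - p • WittVector.teichmuller p x)
        + (WittVector.verschiebung (WittVector.teichmuller p (y ^ p))
          - p • WittVector.teichmuller p y) := by
  refine map_injective (MvPolynomial.map (Int.castRingHom ℚ))
    (MvPolynomial.map_injective _ Int.cast_injective) ?_
  simp only [RingHom.map_sub, RingHom.map_add, map_nsmul, map_verschiebung, map_teichmuller,
    RingHom.map_pow]
  exact aux₁ p _ _

theorem stmt_4 (p : ℕ) [hp : Fact p.Prime] (R : Type*) [CommRing R] (x y : R) :
    WittVector.verschiebung (WittVector.teichmuller p ((x + y) ^ p))
        - p • WittVector.teichmuller p (x + y)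
      = (WittVector.verschiebung (WittVector.teichmuller p (x ^ p))
          - p • WittVector.teichmuller p x)
        + (WittVector.verschiebung (WittVector.teichmuller p (y ^ p))
          - p • WittVector.teichmuller p y) := by
  rcases MvPolynomial.counit_surjective R x with ⟨x, rfl⟩
  rcases MvPolynomial.counit_surjective R y with ⟨y, rfl⟩
  have := congrArg (WittVector.map (MvPolynomial.counit R)) (aux₂ p x y)
  simpa only [RingHom.map_sub, RingHom.map_add, map_nsmul, map_verschiebung, map_teichmuller,
    RingHom.map_pow] using this
end

section
/- Let p be a prime and A a commutative ring with no p-torsion (multiplication by p is injective on A). Then the group of p-typical Witt vectors W(A) has no p-torsion. -/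
theorem stmt_6 (p : ℕ) [hp : Fact p.Prime] (A : Type*) [CommRing A]
    (htf : ∀ a : A, p • a = 0 → a = 0) :
    ∀ x : WittVector p A, p • x = 0 → x = 0 := by
  have htf' : ∀ (n : ℕ) (a : A), (p : A) ^ n * a = 0 → a = 0 := by
    intro n
    induction n with
    | zero => intro a h; simpa using h
    | succ n ih =>
      intro a h
      apply ih
      apply htf
      rw [nsmul_eq_mul]
      rw [pow_succ] at h
      linear_combination h
  intro x hx
  have hg : ∀ n, WittVector.ghostComponent n x = 0 := by
    intro n
    apply htf
    rw [nsmul_eq_mul, ← map_natCast (WittVector.ghostComponent (p := p) n), ← map_mul,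
      ← nsmul_eq_mul, hx, map_zero]
  ext n
  induction n using Nat.strong_induction_on with
  | _ n ih =>
    have h := hg n
    rw [WittVector.ghostComponent_apply, aeval_wittPolynomial] at h
    rw [Finset.sum_eq_single n] at h
    · simp only [Nat.sub_self, pow_zero, pow_one] at h
      simpa using htf' n _ h
    · intro i hi hne
      have : i < n := lt_of_le_of_ne (Nat.lt_succ_iff.mp (Finset.mem_range.mp hi)) hne
      rw [ih i this, WittVector.zero_coeff]
      have hpos : 0 < p ^ (n - i) := pow_pos hp.out.pos _
      rw [zero_pow hpos.ne', mul_zero]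
    · intro h; simp at h
end

section
/- Let p be a prime and R a commutative ring. The Frobenius F : W(R) → W(R) is the unique additive endomorphism satisfying F⟨x⟩ = ⟨x^p⟩ for all x ∈ R and F ∘ V = multiplication by p. -/
open WittVector

private theorem frob_teich_aux₁ (p : ℕ) [hp : Fact p.Prime] {R : Type*} [CommRing R]
    (x : MvPolynomial R ℚ) :
    frobenius (teichmuller p x) = teichmuller p (x ^ p) := by
  apply (ghostMap.bijective_of_invertible p (MvPolynomial R ℚ)).1
  ext1 n
  simp only [ghostMap_apply, ghostComponent_frobenius, ghostComponent_teichmuller,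
    ← pow_mul]
  rw [pow_succ']

private theorem frob_teich_aux₂ (p : ℕ) [hp : Fact p.Prime] {R : Type*} [CommRing R]
    (x : MvPolynomial R ℤ) :
    frobenius (teichmuller p x) = teichmuller p (x ^ p) := by
  refine map_injective (MvPolynomial.map (Int.castRingHom ℚ))
    (MvPolynomial.map_injective _ Int.cast_injective) ?_
  rw [(frobenius_isPoly p).map, map_teichmuller, frob_teich_aux₁, ← map_pow, ← map_teichmuller]

theorem frob_teich (p : ℕ) [hp : Fact p.Prime] (R : Type*) [CommRing R] (x : R) :
    frobenius (teichmuller p x) = teichmuller p (x ^ p) := by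
  rcases MvPolynomial.counit_surjective R x with ⟨x, rfl⟩
  rw [← map_teichmuller, ← (frobenius_isPoly p).map, frob_teich_aux₂, map_teichmuller, map_pow]

theorem exists_verschiebung (p : ℕ) [hp : Fact p.Prime] {R : Type*} [CommRing R]
    (w : WittVector p R) (h : w.coeff 0 = 0) : ∃ u, verschiebung u = w := by
  refine ⟨WittVector.mk p fun n => w.coeff (n + 1), ?_⟩
  ext n
  cases n with
  | zero => rw [verschiebung_coeff_zero, h]
  | succ n => rw [verschiebung_coeff_succ, coeff_mk]

theorem stmt_12 (p : ℕ) [hp : Fact p.Prime] (R : Type*) [CommRing R] :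
    (∀ x : R, WittVector.frobenius (WittVector.teichmuller p x)
        = WittVector.teichmuller p (x ^ p)) ∧
    (∀ w : WittVector p R,
        WittVector.frobenius (WittVector.verschiebung w) = p • w) ∧
    (∀ g : WittVector p R →+ WittVector p R,
        (∀ x : R, g (WittVector.teichmuller p x) = WittVector.teichmuller p (x ^ p)) →
        (∀ w : WittVector p R, g (WittVector.verschiebung w) = p • w) →
        ∀ w : WittVector p R, g w = WittVector.frobenius w) := by
  refine ⟨frob_teich p R, fun w => ?_, fun g hg1 hg2 w => ?_⟩
  · rw [frobenius_verschiebung, nsmul_eq_mul, mul_comm]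
  · obtain ⟨u, hu⟩ := exists_verschiebung p (w - teichmuller p (w.coeff 0)) (by
      have : (constantCoeff : WittVector p R →+* R) (w - teichmuller p (w.coeff 0)) = 0 := by
        rw [map_sub]
        simp [constantCoeff_apply, teichmuller_coeff_zero, sub_self]
      simpa [constantCoeff_apply] using this)
    have hw : w = teichmuller p (w.coeff 0) + verschiebung u := by
      rw [hu]; ring
    rw [hw, map_add, map_add, hg1, hg2, frob_teich, frobenius_verschiebung,
      nsmul_eq_mul, mul_comm]
end

section
/- Let p be a prime and let A be a commutative ring. If Σ_{i=1}^s c_i a_i = 0 with c_i ∈ Z, a_i ∈ A, then in W(A) one has Σ_{i=1}^s c_i (V⟨a_i^p⟩ − p⟨a_i⟩) = 0. -/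
open WittVector MvPolynomial

private noncomputable def f16 (p : ℕ) [Fact p.Prime] {A : Type*} [CommRing A] (a : A) :
    WittVector p A :=
  WittVector.verschiebung (WittVector.teichmuller p (a ^ p))
    - p • WittVector.teichmuller p a

private lemma map_f16 (p : ℕ) [Fact p.Prime] {A B : Type*} [CommRing A] [CommRing B]
    (g : A →+* B) (a : A) : WittVector.map g (f16 p a) = f16 p (g a) := by
  simp [f16, map_sub, WittVector.map_verschiebung, WittVector.map_teichmuller, map_nsmul,
    map_pow]

private lemma ghost_f16 (p : ℕ) [Fact p.Prime] {A : Type*} [CommRing A] (a : A) (n : ℕ) :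
    WittVector.ghostComponent n (f16 p a) = if n = 0 then -(p * a) else 0 := by
  cases n with
  | zero =>
    simp [f16, ghostComponent_zero_verschiebung, ghostComponent_teichmuller]
  | succ n =>
    simp [f16, ghostComponent_verschiebung, ghostComponent_teichmuller, ← pow_mul,
      pow_succ, mul_comm]

private lemma f16_int_add :
    ∀ (p : ℕ) [Fact p.Prime],
      f16 p (X 0 + X 1 : MvPolynomial (Fin 2) ℤ) =
        f16 p (X 0) + f16 p (X 1) := by
  intro p _
  apply WittVector.map_injective (MvPolynomial.map (Int.castRingHom ℚ))
    (MvPolynomial.map_injective _ Int.cast_injective)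
  have : Invertible (p : MvPolynomial (Fin 2) ℚ) := by
    have h1 : Invertible ((p : ℚ)) :=
      invertibleOfNonzero (Nat.cast_ne_zero.mpr (Fact.out : p.Prime).ne_zero)
    have h2 := Invertible.map (algebraMap ℚ (MvPolynomial (Fin 2) ℚ)) (p : ℚ)
    rwa [map_natCast] at h2
  apply (WittVector.ghostMap.bijective_of_invertible p _).injective
  funext n
  have hg : ∀ x : WittVector p (MvPolynomial (Fin 2) ℚ),
      WittVector.ghostMap x n = WittVector.ghostComponent n x := fun _ => rfl
  simp only [map_add, map_f16, MvPolynomial.map_X, hg, ghost_f16]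
  split <;> ring

private lemma f16_add (p : ℕ) [Fact p.Prime] {A : Type*} [CommRing A] (a b : A) :
    f16 p (a + b) = f16 p a + f16 p b := by
  have h := f16_int_add p
  have := congrArg (WittVector.map (MvPolynomial.aeval
      (fun i : Fin 2 => ![a, b] i) : MvPolynomial (Fin 2) ℤ →ₐ[ℤ] A).toRingHom) h
  simpa [map_f16, map_add] using this

private noncomputable def f16Hom (p : ℕ) [Fact p.Prime] (A : Type*) [CommRing A] :
    A →+ WittVector p A where
  toFun := f16 p
  map_zero' := by simp [f16, zero_pow (Fact.out : p.Prime).ne_zero]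
  map_add' := f16_add p

theorem stmt_16 (p : ℕ) [hp : Fact p.Prime] (A : Type*) [CommRing A]
    (s : ℕ) (c : Fin s → ℤ) (a : Fin s → A)
    (h : ∑ i, c i • a i = 0) :
    ∑ i, c i • (WittVector.verschiebung (WittVector.teichmuller p (a i ^ p))
        - p • WittVector.teichmuller p (a i)) = 0 := by
  have : ∑ i, c i • f16 p (a i) = 0 := by
    rw [show (fun i => c i • f16 p (a i)) = fun i => f16Hom p A (c i • a i) from ?_]
    · rw [← map_sum, h, map_zero]
    · funext i
      rw [map_zsmul]
      rfl
  simpa [f16] using this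
end
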